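/- arXiv:1908.06394 — 5 statements merged into one kernel-verified Lean document; each statement's English description precedes it below -/
import Mathlib

section
/- Let (Ω, ℙ) be a probability space, let X, Y : Ω → ℝ be independent random variables, let e denote Euler's number, and let λ_h, λ_a, T be positive reals with λ_h > e·λ_a. Set ν = (λ_h - e·λ_a)/3. Suppose ℙ(X < λ_h T - ν T) ≤ 2·exp(-ν² T / (3 λ_h)) and ℙ(Y > e·λ_a T + ν T) ≤ exp(-ν T). Then ℙ(X > Y) ≥ (1 - 2·exp(-ν² T / (3 λ_h)))·(1 - exp(-ν T)). -/
/-!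
On the events `{X ≥ λ_h T - νT}` and `{Y ≤ e λ_a T + νT}` we have `X > Y`, because the two
thresholds differ by `νT > 0`. The tail bounds give the probabilities of these events, and
independence of `X` and `Y` multiplies them.
-/

open MeasureTheory ProbabilityTheory
open scoped ENNReal

namespace MeasureTheory

lemma one_sub_le_prob_of_prob_compl_le {Ω : Type*} [MeasurableSpace Ω] {μ : Measure Ω}
    [IsProbabilityMeasure μ] {s : Set Ω} {p : ℝ≥0∞} (h : μ sᶜ ≤ p) : 1 - p ≤ μ s := by
  rw [tsub_le_iff_right]
  calc 1 = μ Set.univ := measure_univ.symm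
    _ ≤ μ s + μ sᶜ := measure_univ_le_add_compl s
    _ ≤ μ s + p := add_le_add_right h _

end MeasureTheory

lemma ENNReal.ofReal_one_sub_mul_one_sub_le {p q : ℝ} (hp : 0 ≤ p) (hq : 0 ≤ q) (hq1 : q ≤ 1) :
    ENNReal.ofReal ((1 - p) * (1 - q)) ≤ (1 - ENNReal.ofReal p) * (1 - ENNReal.ofReal q) := by
  rcases le_or_gt 1 p with hp1 | hp1
  · rw [ENNReal.ofReal_of_nonpos (mul_nonpos_of_nonpos_of_nonneg (by linarith) (by linarith))]
    exact zero_le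
  · rw [ENNReal.ofReal_mul (by linarith), ENNReal.ofReal_sub 1 hp, ENNReal.ofReal_sub 1 hq,
      ENNReal.ofReal_one]

namespace ProbabilityTheory

lemma IndepFun.one_sub_mul_one_sub_le_prob_lt {Ω α : Type*} [MeasurableSpace Ω]
    {μ : Measure Ω} [IsProbabilityMeasure μ] [LinearOrder α] [TopologicalSpace α]
    [OrderClosedTopology α] [MeasurableSpace α] [OpensMeasurableSpace α] {X Y : Ω → α}
    (hindep : IndepFun X Y μ) {a b : α} (hba : b < a) {p q : ℝ≥0∞}
    (hX : μ {ω | X ω < a} ≤ p) (hY : μ {ω | b < Y ω} ≤ q) :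
    (1 - p) * (1 - q) ≤ μ {ω | Y ω < X ω} := by
  have hXa : 1 - p ≤ μ (X ⁻¹' Set.Ici a) :=
    one_sub_le_prob_of_prob_compl_le (by rwa [← Set.preimage_compl, Set.compl_Ici])
  have hYb : 1 - q ≤ μ (Y ⁻¹' Set.Iic b) :=
    one_sub_le_prob_of_prob_compl_le (by rwa [← Set.preimage_compl, Set.compl_Iic])
  calc (1 - p) * (1 - q)
      ≤ μ (X ⁻¹' Set.Ici a) * μ (Y ⁻¹' Set.Iic b) := mul_le_mul' hXa hYb
    _ = μ (X ⁻¹' Set.Ici a ∩ Y ⁻¹' Set.Iic b) :=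
      (hindep.measure_inter_preimage_eq_mul _ _ measurableSet_Ici measurableSet_Iic).symm
    _ ≤ μ {ω | Y ω < X ω} :=
      measure_mono fun _ ⟨hxa, hyb⟩ => lt_of_le_of_lt hyb (lt_of_lt_of_le hba hxa)

end ProbabilityTheory

theorem longest_chain_wins_general {Ω : Type*} [MeasureSpace Ω] [IsProbabilityMeasure (ℙ : Measure Ω)]
    (X Y : Ω → ℝ)
    (hindep : IndepFun X Y ℙ)
    (e lamh lama T : ℝ)
    (hT : 0 < T) (hgt : lamh > e * lama)
    (ν : ℝ) (hν : ν = (lamh - e * lama) / 3)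
    (hXbound : ℙ {ω | X ω < lamh * T - ν * T} ≤
      ENNReal.ofReal (2 * Real.exp (-(ν ^ 2 * T) / (3 * lamh))))
    (hYbound : ℙ {ω | Y ω > e * lama * T + ν * T} ≤ ENNReal.ofReal (Real.exp (-(ν * T)))) :
    ℙ {ω | X ω > Y ω} ≥
      ENNReal.ofReal
        ((1 - 2 * Real.exp (-(ν ^ 2 * T) / (3 * lamh))) * (1 - Real.exp (-(ν * T)))) := by
  have hνT : 0 < ν * T := mul_pos (by rw [hν]; linarith) hT
  have hgap : e * lama * T + ν * T < lamh * T - ν * T := by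
    have : lamh * T - e * lama * T = 3 * (ν * T) := by rw [hν]; ring
    linarith
  have hq1 : Real.exp (-(ν * T)) ≤ 1 := Real.exp_le_one_iff.mpr (by linarith)
  exact (ENNReal.ofReal_one_sub_mul_one_sub_le (by positivity) (Real.exp_nonneg _) hq1).trans
    (hindep.one_sub_mul_one_sub_le_prob_lt hgap hXbound hYbound)

/-- mathematical content of Lemma 9: under the same tail bounds and
independence, `ℙ(X > Y) ≥ (1 - 2·exp(-ν²T/(3λ_h)))·(1 - exp(-νT))`. -/
theorem longest_chain_wins {Ω : Type*} [MeasureSpace Ω] [IsProbabilityMeasure (ℙ : Measure Ω)]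
    (X Y : Ω → ℝ) (hX : Measurable X) (hY : Measurable Y)
    (hindep : IndepFun X Y ℙ)
    (e lamh lama T : ℝ) (he : e = Real.exp 1)
    (hlamh : 0 < lamh) (hlama : 0 < lama) (hT : 0 < T) (hgt : lamh > e * lama)
    (ν : ℝ) (hν : ν = (lamh - e * lama) / 3)
    (hXbound : ℙ {ω | X ω < lamh * T - ν * T} ≤
      ENNReal.ofReal (2 * Real.exp (-(ν ^ 2 * T) / (3 * lamh))))
    (hYbound : ℙ {ω | Y ω > e * lama * T + ν * T} ≤ ENNReal.ofReal (Real.exp (-(ν * T)))) :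
    ℙ {ω | X ω > Y ω} ≥
      ENNReal.ofReal
        ((1 - 2 * Real.exp (-(ν ^ 2 * T) / (3 * lamh))) * (1 - Real.exp (-(ν * T)))) :=
  longest_chain_wins_general X Y hindep e lamh lama T hT hgt ν hν hXbound hYbound
end

section
/- Let k ≥ 1 be a natural number, let p : Fin k → ℝ satisfy p_j ≥ 0 for all j and ∑_j p_j = 1, and let y : Fin k → ℝ satisfy y_j ≥ 0 for all j. Then there exists an index i such that ∑_{j ≠ i} (1 - 2·p_j)·y_j ≥ 0. -/
/-- combinatorial core of the multi-fork slashing analysis: if `p` is a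
probability vector and `y` is nonnegative, some index `i` satisfies
`∑_{j ≠ i} (1 - 2p_j)·y_j ≥ 0`. -/
theorem multi_fork_core (k : ℕ) (hk : 1 ≤ k)
    (p : Fin k → ℝ) (hp : ∀ j, 0 ≤ p j) (hsum : ∑ j, p j = 1)
    (y : Fin k → ℝ) (hy : ∀ j, 0 ≤ y j) :
    ∃ i : Fin k, 0 ≤ ∑ j ∈ Finset.univ \ {i}, (1 - 2 * p j) * y j := by
  haveI : NeZero k := ⟨by omega⟩
  obtain ⟨i, hi⟩ := Finite.exists_max p
  refine ⟨i, Finset.sum_nonneg fun j hj => ?_⟩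
  have hne : j ≠ i := by
    simp only [Finset.mem_sdiff, Finset.mem_singleton] at hj
    exact hj.2
  have h2 : p j + p i ≤ 1 := by
    rw [← hsum]
    have hpair : ({j, i} : Finset (Fin k)).sum p = p j + p i :=
      Finset.sum_pair hne
    rw [← hpair]
    exact Finset.sum_le_sum_of_subset_of_nonneg (Finset.subset_univ _)
      (fun x _ _ => hp x)
  have : 2 * p j ≤ 1 := by
    have := hi j
    linarith
  have h1 : 0 ≤ 1 - 2 * p j := by linarith
  exact mul_nonneg h1 (hy j)
end

section
/- Let k ≥ 1 be a natural number, let R > 0, let p : Fin k → ℝ satisfy p_j ≥ 0 and ∑_j p_j = 1, and let x, y : Fin k → ℝ satisfy x_j ≥ 0 and y_j ≥ 0. Write X = ∑_j x_j and Y = ∑_j y_j. Define E₀ = (2·∑_j p_j·(x_j + y_j) - (X + Y))·R, and for each i define E_i = (2·∑_j p_j·(x_j + y_j) - (X + 2·∑_{j ≠ i} p_j·y_j + y_i))·R. Then there exists an index i such that E_i ≥ E₀. -/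
/-! Let `i` be a fork of maximal winning probability. Every other fork `j` then satisfies
`2 p_j ≤ p_j + p_i ≤ 1`, so each further block on `j` costs at least as much in expected slashing
as it earns, and withdrawing them all (publishing only on `i`) cannot lower the expected reward. -/

open Finset

section
variable {R ι : Type*} [CommSemiring R] [LinearOrder R] [IsOrderedRing R] [Fintype ι]

theorem two_mul_le_sum_of_le_of_ne {p : ι → R} (hp : ∀ j, 0 ≤ p j) {i j : ι} (hji : j ≠ i)
    (hle : p j ≤ p i) : 2 * p j ≤ ∑ k, p k := by
  classical
  calc 2 * p j = p j + p j := two_mul _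
    _ ≤ p j + p i := add_le_add_right hle _
    _ = ∑ k ∈ {j, i}, p k := (sum_pair hji).symm
    _ ≤ ∑ k, p k := sum_le_sum_of_subset_of_nonneg (subset_univ _) fun k _ _ ↦ hp k

theorem exists_two_mul_sum_sdiff_add_le_sum [Nonempty ι] [DecidableEq ι] {p y : ι → R}
    (hp : ∀ j, 0 ≤ p j) (hsum : ∑ j, p j = 1) (hy : ∀ j, 0 ≤ y j) :
    ∃ i, 2 * ∑ j ∈ univ \ {i}, p j * y j + y i ≤ ∑ j, y j := by
  obtain ⟨i, -, hi⟩ := exists_max_image univ p univ_nonempty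
  refine ⟨i, ?_⟩
  have hslash : ∀ j ∈ univ \ {i}, 2 * (p j * y j) ≤ y j := fun j hj ↦ by
    have hji : j ≠ i := by simpa using hj
    have hpj : 2 * p j ≤ 1 := hsum ▸ two_mul_le_sum_of_le_of_ne hp hji (hi j (mem_univ j))
    rw [← mul_assoc]
    exact mul_le_of_le_one_left (hy j) hpj
  calc 2 * ∑ j ∈ univ \ {i}, p j * y j + y i
      ≤ ∑ j ∈ univ \ {i}, y j + y i := by
        rw [mul_sum]
        exact add_le_add_left (sum_le_sum hslash) _
    _ = ∑ j, y j := (sum_eq_sum_sdiff_singleton_add (mem_univ i) y).symm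

end

theorem multi_fork_slashing_general (k : ℕ) (hk : 1 ≤ k) (R : ℝ) (hR : 0 < R)
    (p : Fin k → ℝ) (hp : ∀ j, 0 ≤ p j) (hsum : ∑ j, p j = 1)
    (x y : Fin k → ℝ) (hy : ∀ j, 0 ≤ y j)
    (X Y : ℝ) (hY : Y = ∑ j, y j)
    (E₀ : ℝ) (hE₀ : E₀ = (2 * ∑ j, p j * (x j + y j) - (X + Y)) * R)
    (E : Fin k → ℝ)
    (hE : ∀ i, E i =
      (2 * ∑ j, p j * (x j + y j) -
        (X + 2 * ∑ j ∈ Finset.univ \ {i}, p j * y j + y i)) * R) :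
    ∃ i : Fin k, E i ≥ E₀ := by
  have : Nonempty (Fin k) := ⟨⟨0, hk⟩⟩
  obtain ⟨i, hi⟩ := exists_two_mul_sum_sdiff_add_le_sum hp hsum hy
  refine ⟨i, ?_⟩
  rw [hE, hE₀, hY]
  exact mul_le_mul_of_nonneg_right (by linarith) hR.le

/-- multi-fork slashing analysis (Theorem 2, nothing-at-stake immunity):
some single-fork strategy `E_i` is at least as good as publishing on all forks `E₀`. -/
theorem multi_fork_slashing (k : ℕ) (hk : 1 ≤ k) (R : ℝ) (hR : 0 < R)
    (p : Fin k → ℝ) (hp : ∀ j, 0 ≤ p j) (hsum : ∑ j, p j = 1)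
    (x y : Fin k → ℝ) (hx : ∀ j, 0 ≤ x j) (hy : ∀ j, 0 ≤ y j)
    (X Y : ℝ) (hX : X = ∑ j, x j) (hY : Y = ∑ j, y j)
    (E₀ : ℝ) (hE₀ : E₀ = (2 * ∑ j, p j * (x j + y j) - (X + Y)) * R)
    (E : Fin k → ℝ)
    (hE : ∀ i, E i =
      (2 * ∑ j, p j * (x j + y j) -
        (X + 2 * ∑ j ∈ Finset.univ \ {i}, p j * y j + y i)) * R) :
    ∃ i : Fin k, E i ≥ E₀ :=
  multi_fork_slashing_general k hk R hR p hp hsum x y hy X Y hY E₀ hE₀ E hE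
end

section
/- Let e denote Euler's number and let λ_h, λ_a, ζ, R be positive reals with λ_h > e·λ_a. For each T > 0 let a_T, b_T : ℕ → ℝ be functions with 0 ≤ a_T(k) ≤ 1 and 0 ≤ b_T(k) ≤ 1 for all k, satisfying: (i) a_T(k) ≤ exp(-(k - 1 - e·λ_a·T)) for every k ≥ 1, and (ii) a_T(k)·b_T(k) ≤ 1 - (1 - 2·exp(-ζ·T))² for every k with 1 ≤ k ≤ λ_h·T. Then for each T the series ∑_{k=1}^∞ a_T(k)·b_T(k)·k converges, and lim_{T → ∞} R·∑_{k=1}^∞ a_T(k)·b_T(k)·k = 0. -/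
open Filter
set_option maxHeartbeats 1000000

lemma aux_polyexp {c : ℝ} (hc : 0 < c) (n : ℕ) :
    Tendsto (fun T : ℝ => T ^ n * Real.exp (-(c * T))) atTop (nhds 0) := by
  have h1 := (Real.tendsto_pow_mul_exp_neg_atTop_nhds_zero n).comp
      (Tendsto.const_mul_atTop hc tendsto_id)
  have h2 := h1.const_mul ((c ^ n)⁻¹)
  simp only [mul_zero] at h2
  have heq : (fun T : ℝ => T ^ n * Real.exp (-(c * T)))
      = fun T : ℝ => (c ^ n)⁻¹ * ((fun x : ℝ => x ^ n * Real.exp (-x)) ((fun T => c * T) T)) := by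
    funext T
    simp only [Function.comp, mul_pow]
    field_simp
  rw [heq]
  exact h2

lemma aux_qpow (k : ℕ) : Real.exp (-1) ^ k = Real.exp (-(k : ℝ)) := by
  rw [← Real.exp_nat_mul]
  ring_nf

lemma aux_qsum : Summable (fun k : ℕ => (k : ℝ) * Real.exp (-1) ^ k) := by
  have h : ‖Real.exp (-1)‖ < 1 := by
    rw [Real.norm_eq_abs, abs_of_pos (Real.exp_pos _)]
    exact Real.exp_lt_one_iff.2 (by norm_num)
  simpa using summable_pow_mul_geometric_of_norm_lt_one 1 h

lemma aux_qsum0 : Summable (fun k : ℕ => Real.exp (-1) ^ k) := by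
  refine summable_geometric_of_lt_one (le_of_lt (Real.exp_pos _)) ?_
  exact Real.exp_lt_one_iff.2 (by norm_num)

/-- analytic content of Theorem 5 (attacker expected return): under the tail
bounds (i) and (ii), the adversary's expected reward `R·∑_{k≥1} a_T(k)·b_T(k)·k` is a
convergent series for each `T > 0` and tends to `0` as `T → ∞`. -/
theorem attacker_expected_return (e lamh lama ζ R : ℝ) (he : e = Real.exp 1)
    (hlamh : 0 < lamh) (hlama : 0 < lama) (hζ : 0 < ζ) (hR : 0 < R)
    (hgt : lamh > e * lama)
    (a b : ℝ → ℕ → ℝ)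
    (ha : ∀ T > (0 : ℝ), ∀ k : ℕ, 0 ≤ a T k ∧ a T k ≤ 1)
    (hb : ∀ T > (0 : ℝ), ∀ k : ℕ, 0 ≤ b T k ∧ b T k ≤ 1)
    (hi : ∀ T > (0 : ℝ), ∀ k : ℕ, 1 ≤ k →
      a T k ≤ Real.exp (-((k : ℝ) - 1 - e * lama * T)))
    (hii : ∀ T > (0 : ℝ), ∀ k : ℕ, 1 ≤ k → (k : ℝ) ≤ lamh * T →
      a T k * b T k ≤ 1 - (1 - 2 * Real.exp (-(ζ * T))) ^ 2) :
    (∀ T > (0 : ℝ), Summable (fun k : ℕ => a T k * b T k * (k : ℝ))) ∧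
      Tendsto (fun T : ℝ => R * ∑' k : ℕ, a T k * b T k * (k : ℝ)) atTop (nhds 0) := by
  set q : ℝ := Real.exp (-1) with hq
  -- pointwise bound by the majorant
  have hmajb : ∀ T > (0 : ℝ), ∀ k : ℕ,
      a T k * b T k * (k : ℝ) ≤ Real.exp (1 + e * lama * T) * ((k : ℝ) * q ^ k) := by
    intro T hT k
    rcases Nat.eq_zero_or_pos k with hk | hk
    · simp [hk]
    · have h1 : a T k ≤ Real.exp (1 + e * lama * T) * q ^ k := by
        have := hi T hT k hk
        rw [aux_qpow, ← Real.exp_add] at *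
        calc a T k ≤ Real.exp (-((k : ℝ) - 1 - e * lama * T)) := this
          _ = Real.exp (1 + e * lama * T + -(k : ℝ)) := by ring_nf
      have hb1 := (hb T hT k).2
      have hb0 := (hb T hT k).1
      have ha0 := (ha T hT k).1
      have hk0 : (0 : ℝ) ≤ (k : ℝ) := Nat.cast_nonneg k
      nlinarith [mul_nonneg ha0 hk0, mul_nonneg (mul_nonneg ha0 hb0) hk0]
  have hnn : ∀ T > (0 : ℝ), ∀ k : ℕ, 0 ≤ a T k * b T k * (k : ℝ) := fun T hT k =>
    mul_nonneg (mul_nonneg (ha T hT k).1 (hb T hT k).1) (Nat.cast_nonneg k)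
  have hmaj_sum : ∀ T : ℝ,
      Summable (fun k : ℕ => Real.exp (1 + e * lama * T) * ((k : ℝ) * q ^ k)) :=
    fun T => aux_qsum.mul_left _
  have hsum : ∀ T > (0 : ℝ), Summable (fun k : ℕ => a T k * b T k * (k : ℝ)) := by
    intro T hT
    exact Summable.of_nonneg_of_le (hnn T hT) (hmajb T hT) (hmaj_sum T)
  refine ⟨hsum, ?_⟩
  set A : ℝ := ∑' k : ℕ, (k : ℝ) * q ^ k with hA
  set B : ℝ := ∑' k : ℕ, q ^ k with hB
  have hA0 : 0 ≤ A := tsum_nonneg fun k =>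
    mul_nonneg (Nat.cast_nonneg k) (pow_nonneg (le_of_lt (Real.exp_pos _)) k)
  have hB0 : 0 ≤ B := tsum_nonneg fun k => pow_nonneg (le_of_lt (Real.exp_pos _)) k
  have hc2 : 0 < lamh - e * lama := by linarith
  set G : ℝ → ℝ := fun T => 4 * Real.exp (-(ζ * T)) * (lamh * T + 1) ^ 2 +
      Real.exp 1 * Real.exp (-((lamh - e * lama) * T)) * (A + (lamh * T + 1) * B) with hG
  -- key bound : for T > 0, tsum ≤ G T
  have hkey : ∀ T > (0 : ℝ), (∑' k : ℕ, a T k * b T k * (k : ℝ)) ≤ G T := by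
    intro T hT
    set N : ℕ := ⌈lamh * T⌉₊ with hN
    have hN1 : 1 ≤ N := Nat.one_le_ceil_iff.2 (by positivity)
    have hNge : lamh * T ≤ (N : ℝ) := Nat.le_ceil _
    have hNlt : (N : ℝ) < lamh * T + 1 := Nat.ceil_lt_add_one (by positivity)
    have hsplit := (Summable.sum_add_tsum_nat_add (f := fun k : ℕ => a T k * b T k * (k : ℝ))
        N (hsum T hT)).symm
    rw [hsplit]
    have hx0 : 0 ≤ Real.exp (-(ζ * T)) := le_of_lt (Real.exp_pos _)
    -- head bound
    have hhead : (∑ i ∈ Finset.range N, a T i * b T i * (i : ℝ)) ≤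
        4 * Real.exp (-(ζ * T)) * (lamh * T + 1) ^ 2 := by
      have hterm : ∀ i ∈ Finset.range N, a T i * b T i * (i : ℝ) ≤
          4 * Real.exp (-(ζ * T)) * (lamh * T + 1) := by
        intro i hi'
        have hiN : i < N := Finset.mem_range.1 hi'
        rcases Nat.eq_zero_or_pos i with h0 | h1
        · simp [h0]
          positivity
        · have hile : (i : ℝ) ≤ lamh * T := by
            have : (i : ℝ) + 1 ≤ (N : ℝ) := by exact_mod_cast hiN
            linarith
          have h2 := hii T hT i h1 hile
          have hi1 : (i : ℝ) ≤ lamh * T + 1 := by linarith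
          have hnn' := hnn T hT i
          have habr : a T i * b T i ≤ 4 * Real.exp (-(ζ * T)) := by
            nlinarith [sq_nonneg (Real.exp (-(ζ * T)))]
          have hab0 : 0 ≤ a T i * b T i := mul_nonneg (ha T hT i).1 (hb T hT i).1
          have hi0 : (0 : ℝ) ≤ (i : ℝ) := Nat.cast_nonneg i
          nlinarith
      calc (∑ i ∈ Finset.range N, a T i * b T i * (i : ℝ))
          ≤ ∑ _i ∈ Finset.range N, 4 * Real.exp (-(ζ * T)) * (lamh * T + 1) :=
            Finset.sum_le_sum hterm
        _ = (N : ℝ) * (4 * Real.exp (-(ζ * T)) * (lamh * T + 1)) := by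
            rw [Finset.sum_const, Finset.card_range]; simp [nsmul_eq_mul]
        _ ≤ (lamh * T + 1) * (4 * Real.exp (-(ζ * T)) * (lamh * T + 1)) := by
            have : (0 : ℝ) ≤ 4 * Real.exp (-(ζ * T)) * (lamh * T + 1) := by positivity
            nlinarith
        _ = 4 * Real.exp (-(ζ * T)) * (lamh * T + 1) ^ 2 := by ring
    -- tail bound
    have htail : (∑' i : ℕ, a T (i + N) * b T (i + N) * ((i + N : ℕ) : ℝ)) ≤
        Real.exp 1 * Real.exp (-((lamh - e * lama) * T)) * (A + (lamh * T + 1) * B) := by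
      have hs1 : Summable (fun i : ℕ => a T (i + N) * b T (i + N) * ((i + N : ℕ) : ℝ)) :=
        (summable_nat_add_iff N).2 (hsum T hT)
      set c : ℝ := Real.exp (1 + e * lama * T) with hc
      have hs2 : Summable (fun i : ℕ => c * (((i + N : ℕ) : ℝ) * q ^ (i + N))) := by
        have : (fun i : ℕ => c * (((i + N : ℕ) : ℝ) * q ^ (i + N)))
            = fun i : ℕ => (c * q ^ N) * ((i : ℝ) * q ^ i) + (c * q ^ N * (N : ℝ)) * q ^ i := by
          funext i
          push_cast
          rw [pow_add]
          ring
        rw [this]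
        exact ((aux_qsum.mul_left _).add (aux_qsum0.mul_left _))
      have hle1 : (∑' i : ℕ, a T (i + N) * b T (i + N) * ((i + N : ℕ) : ℝ)) ≤
          ∑' i : ℕ, c * (((i + N : ℕ) : ℝ) * q ^ (i + N)) :=
        Summable.tsum_le_tsum (fun i => hmajb T hT (i + N)) hs1 hs2
      have heq2 : (∑' i : ℕ, c * (((i + N : ℕ) : ℝ) * q ^ (i + N)))
          = (c * q ^ N) * (A + (N : ℝ) * B) := by
        have hfun : (fun i : ℕ => c * (((i + N : ℕ) : ℝ) * q ^ (i + N)))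
            = fun i : ℕ => (c * q ^ N) * ((i : ℝ) * q ^ i) + (c * q ^ N * (N : ℝ)) * q ^ i := by
          funext i
          push_cast
          rw [pow_add]
          ring
        rw [hfun, Summable.tsum_add (aux_qsum.mul_left _) (aux_qsum0.mul_left _),
          tsum_mul_left, tsum_mul_left, ← hA, ← hB]
        ring
      rw [heq2] at hle1
      refine le_trans hle1 ?_
      have hcq : c * q ^ N ≤ Real.exp 1 * Real.exp (-((lamh - e * lama) * T)) := by
        rw [aux_qpow, hc, ← Real.exp_add, ← Real.exp_add]
        apply Real.exp_le_exp.2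
        have : lamh * T ≤ (N : ℝ) := hNge
        nlinarith
      have hAB : A + (N : ℝ) * B ≤ A + (lamh * T + 1) * B := by nlinarith
      have h0cq : 0 ≤ c * q ^ N := by positivity
      have h0AB : 0 ≤ A + (N : ℝ) * B := by positivity
      calc (c * q ^ N) * (A + (N : ℝ) * B)
          ≤ (Real.exp 1 * Real.exp (-((lamh - e * lama) * T))) * (A + (N : ℝ) * B) := by
            nlinarith
        _ ≤ (Real.exp 1 * Real.exp (-((lamh - e * lama) * T))) * (A + (lamh * T + 1) * B) := by
            have : (0:ℝ) ≤ Real.exp 1 * Real.exp (-((lamh - e * lama) * T)) := by positivity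
            nlinarith
    exact add_le_add hhead htail
  -- limit of G
  have hGlim : Tendsto G atTop (nhds 0) := by
    have h1 := (aux_polyexp hζ 2).const_mul (4 * lamh ^ 2)
    have h2 := (aux_polyexp hζ 1).const_mul (8 * lamh)
    have h3 := (aux_polyexp hζ 0).const_mul (4 : ℝ)
    have h4 := (aux_polyexp hc2 1).const_mul (Real.exp 1 * lamh * B)
    have h5 := (aux_polyexp hc2 0).const_mul (Real.exp 1 * (A + B))
    have hsum5 := (((h1.add h2).add h3).add h4).add h5
    simp only [mul_zero, add_zero] at hsum5
    refine hsum5.congr fun T => ?_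
    simp only [hG, pow_one, pow_zero, mul_one]
    ring
  -- squeeze
  have hg : Tendsto (fun T : ℝ => R * G T) atTop (nhds 0) := by
    simpa using hGlim.const_mul R
  refine squeeze_zero' ?_ ?_ hg
  · filter_upwards [eventually_gt_atTop (0 : ℝ)] with T hT
    exact mul_nonneg (le_of_lt hR) (tsum_nonneg (hnn T hT))
  · filter_upwards [eventually_gt_atTop (0 : ℝ)] with T hT
    exact mul_le_mul_of_nonneg_left (hkey T hT) (le_of_lt hR)
end

section
/- Let e denote Euler's number, let λ_h > 0, p_s > 0, let l_a < l_c be reals with L = l_c - l_a, and let α_h ∈ (0, 1] satisfy 1 + 1/e - p_s·L > 0 and α_h > (1 + 1/e - p_s·L)⁻¹. Then there is no real T_a > 0 such that l_a + e·((p_s·L·α_h + (1 - α_h))/α_h)·λ_h·T_a > l_c + λ_h·T_a. -/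
/-- long-range attack analysis (Section 5.3): if the honest stake fraction
`α_h` exceeds `(1 + 1/e - p_s(l_c - l_a))⁻¹`, then there is no time `T_a > 0` after which
the adversarial fork overtakes the public chain. -/
theorem long_range_attack_fails (e lamh ps la lc : ℝ) (he : e = Real.exp 1)
    (hlamh : 0 < lamh) (hps : 0 < ps) (hlt : la < lc)
    (L : ℝ) (hL : L = lc - la)
    (αh : ℝ) (hαh : αh ∈ Set.Ioc (0 : ℝ) 1)
    (hpos : 0 < 1 + 1 / e - ps * L)
    (hα : αh > (1 + 1 / e - ps * L)⁻¹) :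
    ¬ ∃ Ta : ℝ, 0 < Ta ∧
      la + e * ((ps * L * αh + (1 - αh)) / αh) * lamh * Ta > lc + lamh * Ta := by
  rintro ⟨Ta, hTa, hgt⟩
  have hα0 : 0 < αh := hαh.1
  have he0 : 0 < e := he ▸ Real.exp_pos 1
  rw [gt_iff_lt, inv_eq_one_div, div_lt_iff₀ hpos] at hα
  have hee : e * (1 / e) = 1 := mul_one_div_cancel he0.ne'
  have key : e * (ps * L * αh + (1 - αh)) < αh := by nlinarith [mul_pos he0 hα0]
  have hc : e * ((ps * L * αh + (1 - αh)) / αh) < 1 := by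
    rw [mul_div_assoc' e _ αh, div_lt_one hα0]; exact key
  nlinarith [mul_pos hlamh hTa]
end
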